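/- arXiv:1801.10418 — 3 statements merged into one kernel-verified Lean document; each statement's English description precedes it below -/
import Mathlib

section
/- For any rooted binary tree T with n leaves, the Sackin index satisfies S(T) ≤ n(n+1)/2 − 1. -/
inductive BTree : Type
  | leaf : BTree
  | node : BTree → BTree → BTree

namespace BTree

def leaves : BTree → ℕ
  | leaf => 1
  | node l r => l.leaves + r.leaves

def sackinAux : BTree → ℕ → ℕ
  | leaf, d => d
  | node l r, d => sackinAux l (d + 1) + sackinAux r (d + 1)

def sackin (t : BTree) : ℕ := sackinAux t 0

def internalLeafSum : BTree → ℕ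
  | leaf => 0
  | node l r => (l.leaves + r.leaves) + internalLeafSum l + internalLeafSum r

def allNodesLeafSum : BTree → ℕ
  | leaf => 1
  | node l r => (l.leaves + r.leaves) + allNodesLeafSum l + allNodesLeafSum r

def nonRootLeafSum : BTree → ℕ
  | leaf => 0
  | node l r => allNodesLeafSum l + allNodesLeafSum r

def height : BTree → ℕ
  | leaf => 0
  | node l r => max l.height r.height + 1

def subtreeAt : BTree → List Bool → Option BTree
  | t, [] => some t
  | leaf, _ :: _ => none
  | node l _, false :: p => subtreeAt l p
  | node _ r, true :: p => subtreeAt r p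

def cherriesAt : BTree → ℕ → ℕ
  | leaf, _ => 0
  | node leaf leaf, d => if d = 1 then 1 else 0
  | node _ _, 0 => 0
  | node l r, d + 1 => cherriesAt l d + cherriesAt r d

inductive DeleteCherry : BTree → ℕ → BTree → Prop
  | base : DeleteCherry (BTree.node BTree.leaf BTree.leaf) 1 BTree.leaf
  | left {l l' r : BTree} {d : ℕ} :
      DeleteCherry l d l' → DeleteCherry (BTree.node l r) (d + 1) (BTree.node l' r)
  | right {l r r' : BTree} {d : ℕ} :
      DeleteCherry r d r' → DeleteCherry (BTree.node l r) (d + 1) (BTree.node l r')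

def caterpillar : ℕ → BTree
  | 0 => BTree.leaf
  | 1 => BTree.leaf
  | n + 2 => BTree.node (caterpillar (n + 1)) BTree.leaf

def balanced : ℕ → BTree
  | 0 => BTree.leaf
  | k + 1 => BTree.node (balanced k) (balanced k)

inductive Iso : BTree → BTree → Prop
  | leaf : Iso BTree.leaf BTree.leaf
  | node {a b c d : BTree} : Iso a c → Iso b d → Iso (BTree.node a b) (BTree.node c d)
  | swap {a b c d : BTree} : Iso a d → Iso b c → Iso (BTree.node a b) (BTree.node c d)

end BTree

open BTree

lemma sackinAux_eq (t : BTree) (d : ℕ) : sackinAux t d = sackin t + d * leaves t := by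
  induction t generalizing d with
  | leaf => simp [sackinAux, sackin, leaves]
  | node l r ihl ihr =>
    show sackinAux l (d+1) + sackinAux r (d+1) = sackinAux l 1 + sackinAux r 1 + d * (leaves l + leaves r)
    rw [ihl, ihr, ihl 1, ihr 1]; ring

lemma leaves_pos (t : BTree) : 1 ≤ leaves t := by
  induction t with
  | leaf => simp [leaves]
  | node l r ihl ihr => unfold leaves; omega

lemma key (t : BTree) : 2 * sackin t + 2 ≤ leaves t * (leaves t + 1) := by
  induction t with
  | leaf => simp [sackin, sackinAux, leaves]
  | node l r ihl ihr =>
    have hl := leaves_pos l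
    have hr := leaves_pos r
    have : sackin (node l r) = sackin l + sackin r + leaves l + leaves r := by
      show sackinAux l 1 + sackinAux r 1 = _
      rw [sackinAux_eq l 1, sackinAux_eq r 1]; ring
    rw [this]
    simp only [leaves]
    nlinarith [ihl, ihr, (leaves l - 1) * (leaves r - 1), Nat.sub_add_cancel hl]

/-- `S(T) ≤ n(n+1)/2 − 1`. -/
theorem stmt4 (t : BTree) : t.sackin ≤ t.leaves * (t.leaves + 1) / 2 - 1 := by
  have h := key t
  have h2 : sackin t + 1 ≤ leaves t * (leaves t + 1) / 2 := by
    rw [Nat.le_div_iff_mul_le (by norm_num)]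
    omega
  omega
end

section
/- For any rooted binary tree T with n leaves and k = ⌈log₂ n⌉, the Sackin index satisfies S(T) ≥ −2^k + n(k+1). -/
open BTree

/-!
Removing the root of `node l r` lowers each of its `n` leaves by one, so
`S(node l r) = S(l) + S(r) + n`. By induction this gives `n (j + 1) ≤ S(T) + 2^j` for every `j`:
the bound for `j + 1` is the sum of the bounds for `j` at the two subtrees plus `n`.
The choice `j = ⌈log₂ n⌉` is the theorem.
-/

namespace BTree

theorem sackinAux_eq_sackin_add (t : BTree) (d : ℕ) :
    t.sackinAux d = t.sackin + d * t.leaves := by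
  induction t generalizing d with
  | leaf => simp [sackin, sackinAux, leaves]
  | node l r ihl ihr =>
    simp only [sackin, sackinAux, leaves]
    rw [ihl, ihr, ihl 1, ihr 1]
    ring

theorem sackin_node (l r : BTree) :
    (node l r).sackin = l.sackin + r.sackin + (node l r).leaves := by
  rw [sackin, sackinAux, sackinAux_eq_sackin_add, sackinAux_eq_sackin_add, leaves]
  ring

theorem leaves_mul_succ_le_sackin_add_two_pow (t : BTree) (j : ℕ) :
    t.leaves * (j + 1) ≤ t.sackin + 2 ^ j := by
  induction t generalizing j with
  | leaf => simpa [leaves, sackin, sackinAux] using Nat.lt_two_pow_self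
  | node l r ihl ihr =>
    rw [sackin_node, leaves]
    cases j with
    | zero => omega
    | succ j => linarith [ihl j, ihr j, pow_succ 2 j]

end BTree

/-- `S(T) ≥ −2^k + n(k+1)` with `k = ⌈log₂ n⌉` (stated additively
in `ℕ`). -/
theorem stmt9 (t : BTree) :
    t.leaves * (Nat.clog 2 t.leaves + 1) ≤ t.sackin + 2 ^ Nat.clog 2 t.leaves :=
  t.leaves_mul_succ_le_sackin_add_two_pow _
end

section
/- For every rooted binary tree T with n = 2^k leaves, S(T) ≥ k·2^k = S(T^bal_k); that is, the fully balanced tree minimizes the Sackin index among trees with 2^k leaves. -/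
namespace BTree

lemma leaves_pos (t : BTree) : 1 ≤ t.leaves := by
  induction t with
  | leaf => simp [leaves]
  | node l r ihl ihr => simp only [leaves]; omega

lemma sackinAux_eq (t : BTree) (d : ℕ) :
    sackinAux t d = sackinAux t 0 + d * t.leaves := by
  induction t generalizing d with
  | leaf => simp [sackinAux, leaves]
  | node l r ihl ihr =>
    show sackinAux l (d+1) + sackinAux r (d+1)
        = (sackinAux l (0+1) + sackinAux r (0+1)) + d * (l.leaves + r.leaves)
    rw [ihl (d+1), ihr (d+1), ihl (0+1), ihr (0+1)]
    ring

lemma powsum_le (d j m : ℕ) (h : ∀ i < d, 2 ^ (j + i) ≤ m) :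
    2 ^ (j + d) ≤ 2 ^ j + d * m := by
  induction d with
  | zero => simp
  | succ d ih =>
    have h1 : 2 ^ (j + d) ≤ 2 ^ j + d * m := ih fun i hi => h i (by omega)
    have h2 : 2 ^ (j + d) ≤ m := h d (by omega)
    have : 2 ^ (j + (d + 1)) = 2 ^ (j + d) + 2 ^ (j + d) := by
      rw [← Nat.add_assoc, pow_succ]; ring
    rw [Nat.succ_mul] at *
    omega

lemma powsum_ge (d j m : ℕ) (h : ∀ i, m ≤ 2 ^ (j + i)) :
    2 ^ j + d * m ≤ 2 ^ (j + d) := by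
  induction d with
  | zero => simp
  | succ d ih =>
    have h2 : m ≤ 2 ^ (j + d) := h d
    have : 2 ^ (j + (d + 1)) = 2 ^ (j + d) + 2 ^ (j + d) := by
      rw [← Nat.add_assoc, pow_succ]; ring
    rw [Nat.succ_mul] at *
    omega

/-- `φ_n(j) = n(j+1) - 2^j` is maximized at `j = clog 2 n`. -/
lemma phi_le (n : ℕ) (hn : 1 ≤ n) (j : ℕ) :
    (n : ℤ) * (j + 1) - 2 ^ j ≤ (n : ℤ) * (Nat.clog 2 n + 1) - 2 ^ (Nat.clog 2 n) := by
  set c := Nat.clog 2 n with hc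
  rcases le_or_gt j c with hle | hlt
  · -- need 2^c ≤ 2^j + (c - j) * n
    have key : 2 ^ c ≤ 2 ^ j + (c - j) * n := by
      rcases eq_or_lt_of_le hn with h1 | h1
      · have hc0 : c = 0 := by rw [hc, ← h1, Nat.clog_one_right]
        have hj : j = 0 := by omega
        simp [hc0, hj]
      · have := powsum_le (c - j) j n (fun i hi => by
          have hlt2 : 2 ^ (j + i) < n := by
            calc 2 ^ (j + i) ≤ 2 ^ (c - 1) :=
              Nat.pow_le_pow_right (by norm_num) (by omega)
            _ < n := Nat.pow_pred_clog_lt_self (by norm_num) h1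
          omega)
        rwa [Nat.add_sub_cancel' hle] at this
    have key' : (2:ℤ) ^ c ≤ 2 ^ j + ((c : ℤ) - j) * n := by
      have := (Nat.cast_le (α := ℤ)).mpr key
      push_cast at this
      rw [Nat.cast_sub hle] at this
      convert this using 2
    nlinarith [key']
  · -- need 2^c + (j - c) * n ≤ 2^j
    have key : 2 ^ c + (j - c) * n ≤ 2 ^ j := by
      have := powsum_ge (j - c) c n (fun i => by
        calc n ≤ 2 ^ c := Nat.le_pow_clog (by norm_num) n
        _ ≤ 2 ^ (c + i) := Nat.pow_le_pow_right (by norm_num) (by omega))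
      rwa [Nat.add_sub_cancel' hlt.le] at this
    have key' : (2:ℤ) ^ c + ((j : ℤ) - c) * n ≤ 2 ^ j := by
      have := (Nat.cast_le (α := ℤ)).mpr key
      push_cast at this
      rw [Nat.cast_sub hlt.le] at this
      convert this using 2
    nlinarith [key']

lemma sackin_lower (t : BTree) :
    (t.leaves : ℤ) * (Nat.clog 2 t.leaves + 1) - 2 ^ (Nat.clog 2 t.leaves)
      ≤ (t.sackin : ℤ) := by
  induction t with
  | leaf => simp [leaves, sackin, sackinAux, Nat.clog_one_right]
  | node l r ihl ihr =>
    have ha := l.leaves_pos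
    have hb := r.leaves_pos
    set a := l.leaves
    set b := r.leaves
    have hn : l.leaves + r.leaves = a + b := rfl
    have hlv : (node l r).leaves = a + b := rfl
    set c := Nat.clog 2 (a + b) with hc
    have hc1 : 1 ≤ c := Nat.clog_pos (by norm_num) (by omega)
    have hsack : (node l r).sackin = l.sackin + r.sackin + a + b := by
      show sackinAux l 1 + sackinAux r 1 = _
      rw [sackinAux_eq l 1, sackinAux_eq r 1]
      simp [sackin]; ring
    have hpa := phi_le a ha (c - 1)
    have hpb := phi_le b hb (c - 1)
    have hcast : ((c : ℤ) - 1) = ((c - 1 : ℕ) : ℤ) := by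
      rw [Nat.cast_sub hc1]; simp
    have h2c : (2:ℤ) ^ c = 2 * 2 ^ (c - 1) := by
      rw [← pow_succ']; congr 1; omega
    rw [hlv, ← hc, hsack]
    push_cast
    rw [h2c]
    have hpa' : (a : ℤ) * ((c:ℤ) - 1 + 1) - 2 ^ (c - 1)
        ≤ (a : ℤ) * (Nat.clog 2 a + 1) - 2 ^ (Nat.clog 2 a) := by
      rw [hcast]; exact hpa
    have hpb' : (b : ℤ) * ((c:ℤ) - 1 + 1) - 2 ^ (c - 1)
        ≤ (b : ℤ) * (Nat.clog 2 b + 1) - 2 ^ (Nat.clog 2 b) := by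
      rw [hcast]; exact hpb
    nlinarith [ihl, ihr]

lemma balanced_stats (k : ℕ) :
    (balanced k).leaves = 2 ^ k ∧ (balanced k).sackin = k * 2 ^ k := by
  induction k with
  | zero => simp [balanced, leaves, sackin, sackinAux]
  | succ k ih =>
    obtain ⟨h1, h2⟩ := ih
    constructor
    · show (balanced k).leaves + (balanced k).leaves = 2 ^ (k + 1)
      rw [h1]; ring
    · show sackinAux (balanced k) 1 + sackinAux (balanced k) 1 = (k+1) * 2 ^ (k+1)
      rw [sackinAux_eq (balanced k) 1]
      simp only [sackin] at h2
      rw [h2, h1]; ring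

end BTree

open BTree

/-- among trees with `2^k` leaves, the fully balanced tree
minimizes the Sackin index: `S(T) ≥ k·2^k = S(T^bal_k)`. -/
theorem stmt11 (k : ℕ) (t : BTree) (h : t.leaves = 2 ^ k) :
    k * 2 ^ k ≤ t.sackin ∧ (balanced k).sackin = k * 2 ^ k := by
  have hlow := t.sackin_lower
  rw [h, Nat.clog_pow 2 k (by norm_num)] at hlow
  obtain ⟨h1, h2⟩ := balanced_stats k
  refine ⟨?_, h2⟩
  have : ((k * 2 ^ k : ℕ) : ℤ) ≤ (t.sackin : ℤ) := by push_cast at hlow ⊢; nlinarith [hlow]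
  exact_mod_cast this
end
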